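/- arXiv:1707.02058 — 2 statements merged into one kernel-verified Lean document; each statement's English description precedes it below -/
import Mathlib

section
/- For the NFA of Figure 2 with states q₀, q₁, ..., q_n, f (unspecified transitions going to a losing sink): Player 1 wins the m-population game if and only if m < n. In particular the cut-off of this family equals the number of intermediate states n. -/
/-- States of the NFA of Figure 2: initial state, n intermediate states,
the target, and a losing sink. -/
inductive Q15 (n : ℕ) : Type
  | init | target | sink
  | mid (i : Fin n)

/-- Alphabet: the letter b and the letters a₁, ..., aₙ. -/
inductive A15 (n : ℕ) : Type
  | b
  | a (i : Fin n)

/-- Transitions: b goes from the initial state to every intermediate state and back;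
aⱼ goes from qᵢ (i ≠ j) to the target and from qⱼ to the sink; letters loop on the
target; all unspecified transitions go to the losing sink. -/
def d15 {n : ℕ} : Q15 n → A15 n → Q15 n → Prop
  | .init, .b, .mid _ => True
  | .init, .a _, .sink => True
  | .mid _, .b, .init => True
  | .mid i, .a j, .target => i ≠ j
  | .mid i, .a j, .sink => i = j
  | .target, _, .target => True
  | .sink, _, .sink => True
  | _, _, _ => False

/-- σ is a winning strategy for Player 1 in the m-population game. -/
def PopWinningStrat {Q A : Type} (Δ : Q → A → Q → Prop) (q0 f : Q) (m : ℕ)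
    (σ : List ((Fin m → Q) × A) → (Fin m → Q) → A) : Prop :=
  ∀ (ρ : ℕ → (Fin m → Q)) (acts : ℕ → A),
    ρ 0 = (fun _ => q0) →
    (∀ n, acts n = σ (List.ofFn (fun i : Fin n => (ρ i.1, acts i.1))) (ρ n)) →
    (∀ n j, Δ (ρ n j) (acts n) (ρ (n + 1) j)) →
    ∃ n, ∀ j, ρ n j = f

/-- Player 1 wins the m-population game. -/
def PopWins {Q A : Type} (Δ : Q → A → Q → Prop) (q0 f : Q) (m : ℕ) : Prop :=
  ∃ σ, PopWinningStrat Δ q0 f m σ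

/-!
With `n ≤ m` agents Player 2 keeps the population in lockstep and, after every `b`, spreads it
over all of `q₁, …, qₙ` (agent `j` goes to `q_{j mod n}`). Then every letter `aᵢ` sends the
agent on `qᵢ` to the sink, so the whole population never reaches the target. With `m < n`
agents some `qᵢ` is empty after the first `b`, and Player 1 wins by playing `aᵢ`.
-/

section PopulationGame

variable {Q A : Type} {m : ℕ}

/-- The play of `σ` against the memoryless Player 2 move `resp`, as (history, configuration). -/
def responsePlay (σ : List ((Fin m → Q) × A) → (Fin m → Q) → A)
    (resp : (Fin m → Q) → A → Fin m → Q) (c₀ : Fin m → Q) :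
    ℕ → List ((Fin m → Q) × A) × (Fin m → Q)
  | 0 => ([], c₀)
  | k + 1 =>
    let p := responsePlay σ resp c₀ k
    (p.1 ++ [(p.2, σ p.1 p.2)], resp p.2 (σ p.1 p.2))

theorem responsePlay_fst (σ : List ((Fin m → Q) × A) → (Fin m → Q) → A)
    (resp : (Fin m → Q) → A → Fin m → Q) (c₀ : Fin m → Q) (k : ℕ) :
    (responsePlay σ resp c₀ k).1 = List.ofFn fun i : Fin k =>
      ((responsePlay σ resp c₀ i).2,
        σ (responsePlay σ resp c₀ i).1 (responsePlay σ resp c₀ i).2) := by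
  induction k with
  | zero => rfl
  | succ k ih =>
    rw [List.ofFn_succ', List.concat_eq_append]
    simp only [Fin.val_castSucc, Fin.val_last, ← ih]
    rfl

theorem not_popWins_of_invariant {Δ : Q → A → Q → Prop} {q0 f : Q}
    (resp : (Fin m → Q) → A → Fin m → Q) (hresp : ∀ c a j, Δ (c j) a (resp c a j))
    (I : Set (Fin m → Q)) (h0 : (fun _ => q0) ∈ I) (hI : ∀ c ∈ I, ∀ a, resp c a ∈ I)
    (hf : ∀ c ∈ I, ∃ j, c j ≠ f) : ¬ PopWins Δ q0 f m := by
  rintro ⟨σ, hσ⟩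
  set p := responsePlay σ resp fun _ => q0
  have hpI : ∀ k, (p k).2 ∈ I := fun k => Nat.rec h0 (fun k ih => hI _ ih _) k
  obtain ⟨k, hk⟩ := hσ (fun k => (p k).2) (fun k => σ (p k).1 (p k).2) rfl
    (fun k => by rw [responsePlay_fst]) (fun k j => hresp _ _ j)
  obtain ⟨j, hj⟩ := hf _ (hpI k)
  exact hj (hk j)

end PopulationGame

theorem Fin.exists_forall_ne_of_lt {m n : ℕ} (g : Fin m → Fin n) (h : m < n) :
    ∃ i, ∀ j, g j ≠ i := by
  by_contra! hg
  exact (Fintype.card_le_of_surjective g hg).not_gt (by simpa using h)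

section Figure2

variable {n m : ℕ}

theorem exists_mid_of_d15_init_b {q : Q15 n} (h : d15 .init .b q) : ∃ i, q = .mid i := by
  cases q <;> simp_all [d15]

theorem eq_target_of_d15_mid_a {i k : Fin n} {q : Q15 n} (h : d15 (.mid i) (.a k) q)
    (hik : i ≠ k) : q = .target := by
  cases q <;> simp_all [d15]

theorem popWins_d15_of_lt (hm : m < n) : PopWins (d15 (n := n)) .init .target m := by
  classical
  refine ⟨fun hist c => if hist = [] then .b
    else if h : ∃ i, ∀ j, c j ≠ .mid i then .a h.choose else .b, ?_⟩
  intro ρ acts h0 hacts htrans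
  have ha0 : acts 0 = .b := by rw [hacts]; simp
  obtain ⟨g, hg⟩ : ∃ g : Fin m → Fin n, ∀ j, ρ 1 j = .mid (g j) := by
    choose g hg using fun j => exists_mid_of_d15_init_b (by simpa [h0, ha0] using htrans 0 j)
    exact ⟨g, hg⟩
  have hfree : ∃ i, ∀ j, ρ 1 j ≠ .mid i := by
    obtain ⟨i, hi⟩ := Fin.exists_forall_ne_of_lt g hm
    exact ⟨i, fun j => by simpa [hg] using hi j⟩
  have ha1 : acts 1 = .a hfree.choose := by rw [hacts]; simp [hfree]
  refine ⟨2, fun j => eq_target_of_d15_mid_a (hg j ▸ ha1 ▸ htrans 1 j) fun h => ?_⟩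
  exact hfree.choose_spec j (by rw [hg, h])

def Q15.respond (hn : 0 < n) (j : ℕ) : Q15 n → A15 n → Q15 n
  | .init, .b => .mid ⟨j % n, Nat.mod_lt _ hn⟩
  | .init, .a _ => .sink
  | .mid _, .b => .init
  | .mid i, .a k => if i = k then .sink else .target
  | .target, _ => .target
  | .sink, _ => .sink

theorem d15_respond (hn : 0 < n) (j : ℕ) (q : Q15 n) (a : A15 n) :
    d15 q a (q.respond hn j a) := by
  cases q <;> cases a <;> simp [Q15.respond, d15]
  split_ifs <;> simp_all

def safeConfigs (n m : ℕ) : Set (Fin m → Q15 n) :=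
  {c | (∀ j, c j = .init) ∨ ((∀ j, ∃ i, c j = .mid i) ∧ ∀ i, ∃ j, c j = .mid i) ∨
    ∃ j, c j = .sink}

theorem respond_mem_safeConfigs (hn : 0 < n) (hm : n ≤ m) {c : Fin m → Q15 n}
    (hc : c ∈ safeConfigs n m) (a : A15 n) :
    (fun j => (c j).respond hn j a) ∈ safeConfigs n m := by
  rcases hc with h | ⟨h, hcover⟩ | ⟨j, hj⟩
  · cases a with
    | b =>
      refine Or.inr (Or.inl ⟨fun j => by simp [h, Q15.respond], fun i => ?_⟩)
      refine ⟨⟨i, i.2.trans_le hm⟩, ?_⟩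
      simp [h, Q15.respond, Nat.mod_eq_of_lt i.2]
    | a k => exact Or.inr (Or.inr ⟨⟨0, hn.trans_le hm⟩, by simp [h, Q15.respond]⟩)
  · cases a with
    | b =>
      refine Or.inl fun j => ?_
      obtain ⟨i, hi⟩ := h j
      simp [hi, Q15.respond]
    | a k =>
      obtain ⟨j, hj⟩ := hcover k
      exact Or.inr (Or.inr ⟨j, by simp [hj, Q15.respond]⟩)
  · exact Or.inr (Or.inr ⟨j, by cases a <;> simp [hj, Q15.respond]⟩)

theorem exists_ne_target_of_mem_safeConfigs (hm : 0 < m) {c : Fin m → Q15 n}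
    (hc : c ∈ safeConfigs n m) : ∃ j, c j ≠ .target := by
  rcases hc with h | ⟨h, -⟩ | ⟨j, hj⟩
  · exact ⟨⟨0, hm⟩, by simp [h]⟩
  · obtain ⟨i, hi⟩ := h ⟨0, hm⟩
    exact ⟨⟨0, hm⟩, by simp [hi]⟩
  · exact ⟨j, by simp [hj]⟩

theorem not_popWins_d15_of_le (hn : 0 < n) (hm : n ≤ m) :
    ¬ PopWins (d15 (n := n)) .init .target m :=
  not_popWins_of_invariant (fun c a j => (c j).respond hn j a)
    (fun c a j => d15_respond hn j (c j) a) (safeConfigs n m) (Or.inl fun _ => rfl)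
    (fun _ hc a => respond_mem_safeConfigs hn hm hc a)
    (fun _ hc => exists_ne_target_of_mem_safeConfigs (hn.trans_le hm) hc)

end Figure2

/-- For the NFA of Figure 2, Player 1 wins the m-population game iff m < n:
the cut-off of this family is n. -/
theorem stmt15 (n : ℕ) (hn : 0 < n) (m : ℕ) :
    PopWins (d15 (n := n)) Q15.init Q15.target m ↔ m < n :=
  ⟨fun h => by_contra fun hm => not_popWins_d15_of_le hn (not_lt.mp hm) h, popWins_d15_of_lt⟩
end

section
/- Consider the NFA of Figure 4 with states {q₀, q₁} and single letter a, where a goes from q₀ to q₀ or q₁ (nondeterministically) and from q₁ to q₁, and the play whose transfer graphs alternate as G H G² H G³ H ..., where G = {(q₀,q₀),(q₀,q₁),(q₁,q₁)} and H = {(q₀,q₀),(q₁,q₀),(q₁,q₁)}. This play has finite capacity (every accumulator has finitely many entries) but unbounded capacity (for every n there is an accumulator with at least 2n entries). -/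
/-- The two states of the NFA of Figure 4: `false` is q₀ and `true` is q₁. -/
abbrev Q19 : Type := Bool

/-- The transfer graph G = {(q₀,q₀),(q₀,q₁),(q₁,q₁)}. -/
def Gg : Set (Q19 × Q19) := {p | p ≠ (true, false)}

/-- The transfer graph H = {(q₀,q₀),(q₁,q₀),(q₁,q₁)}. -/
def Hg : Set (Q19 × Q19) := {p | p ≠ (false, true)}

open Classical in
/-- The sequence of transfer graphs of the play G H G² H G³ H ⋯ :
the k-th occurrence of H (k ≥ 1) is at position (k² + 3k − 2)/2, i.e. the positions n
with 2(n+1) = k² + 3k; all other positions carry G. -/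
noncomputable def seqG : ℕ → Set (Q19 × Q19) :=
  fun n => if ∃ k : ℕ, 2 * (n + 1) = k * k + 3 * k then Hg else Gg

/-- All supports of the play are {q₀, q₁}. -/
def S19 : ℕ → Set Q19 := fun _ => Set.univ

/-- An accumulator of the play: a successor-closed sequence of subsets of the supports. -/
def IsAccumulator (T : ℕ → Set Q19) : Prop :=
  (∀ j, T j ⊆ S19 j) ∧ ∀ j s t, s ∈ T j → (s, t) ∈ seqG j → t ∈ T (j + 1)

/-- The entries of an accumulator. -/
def Entries (T : ℕ → Set Q19) : Set (ℕ × Q19 × Q19) :=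
  {e | (e.2.1, e.2.2) ∈ seqG e.1 ∧ e.2.1 ∉ T e.1 ∧ e.2.2 ∈ T (e.1 + 1)}

-- aux lemmas to insert
lemma not_H_of_between {k j : ℕ} (h1 : k * k + 3 * k < 2 * (j + 1))
    (h2 : 2 * (j + 1) < k * k + 5 * k + 4) : ¬∃ m : ℕ, 2 * (j + 1) = m * m + 3 * m := by
  rintro ⟨m, hm⟩
  rcases le_or_gt m k with h | h
  · nlinarith [Nat.mul_le_mul h h]
  · have h' : k + 1 ≤ m := h
    nlinarith [Nat.mul_le_mul h' h']

lemma exists_G (m : ℕ) : ∃ g, m ≤ g ∧ ¬∃ k : ℕ, 2 * (g + 1) = k * k + 3 * k := by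
  set k := m + 2 with hk
  obtain ⟨a, ha⟩ : Even (k * (k + 1)) := Nat.even_mul_succ_self k
  have hx : k * k + k = 2 * a := by
    have h2 : k * (k + 1) = k * k + k := by ring
    linarith [ha, h2]
  refine ⟨a + k, by omega, ?_⟩
  exact not_H_of_between (k := k) (by linarith) (by linarith)

lemma exists_H (m : ℕ) : ∃ h, m ≤ h ∧ ∃ k : ℕ, 2 * (h + 1) = k * k + 3 * k := by
  set k := m + 1 with hk
  obtain ⟨a, ha⟩ : Even (k * (k + 1)) := Nat.even_mul_succ_self k
  have hx : k * k + k = 2 * a := by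
    have h2 : k * (k + 1) = k * k + k := by ring
    linarith [ha, h2]
  have hk1 : 1 ≤ k := by omega
  have hkk : 1 ≤ k * k := Nat.one_le_iff_ne_zero.mpr (by positivity)
  refine ⟨a + k - 1, by omega, k, ?_⟩
  have : a + k - 1 + 1 = a + k := by omega
  rw [this]; omega

lemma diag_mem (j : ℕ) (s : Q19) : (s, s) ∈ seqG j := by
  unfold seqG
  split
  · cases s <;> simp [Hg]
  · cases s <;> simp [Gg]

lemma acc_mono {T : ℕ → Set Q19} (hT : IsAccumulator T) {i j : ℕ} (hij : i ≤ j) :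
    T i ⊆ T j := by
  induction j, hij using Nat.le_induction with
  | base => exact subset_rfl
  | succ n hn ih =>
    exact ih.trans (fun s hs => hT.2 n s s hs (diag_mem n s))

/-- The play G H G² H G³ H ⋯ has finite capacity (every accumulator has finitely many
entries) but unbounded capacity (for every n some accumulator has at least 2n entries). -/
theorem stmt19 :
    (∀ T, IsAccumulator T → (Entries T).Finite) ∧
    (∀ n : ℕ, ∃ T, IsAccumulator T ∧ ((2 * n : ℕ) : ℕ∞) ≤ (Entries T).encard) := by
  constructor
  · intro T hT
    by_cases hE : ∃ j s, s ∈ T j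
    · obtain ⟨j0, s, hs⟩ := hE
      have key : ∃ J : ℕ, ∀ j, J ≤ j → T j = Set.univ := by
        cases s with
        | false =>
          obtain ⟨g, hg, hgG⟩ := exists_G j0
          have hf : false ∈ T g := acc_mono hT hg hs
          have hseq : seqG g = Gg := by unfold seqG; rw [if_neg hgG]
          have h1 : true ∈ T (g + 1) := hT.2 g false true hf (by rw [hseq]; simp [Gg])
          have h0 : false ∈ T (g + 1) := hT.2 g false false hf (by rw [hseq]; simp [Gg])
          refine ⟨g + 1, fun j hj => Set.eq_univ_of_forall fun x => ?_⟩
          cases x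
          · exact acc_mono hT hj h0
          · exact acc_mono hT hj h1
        | true =>
          obtain ⟨h, hh, hhH⟩ := exists_H j0
          have hf : true ∈ T h := acc_mono hT hh hs
          have hseq : seqG h = Hg := by unfold seqG; rw [if_pos hhH]
          have h1 : true ∈ T (h + 1) := hT.2 h true true hf (by rw [hseq]; simp [Hg])
          have h0 : false ∈ T (h + 1) := hT.2 h true false hf (by rw [hseq]; simp [Hg])
          refine ⟨h + 1, fun j hj => Set.eq_univ_of_forall fun x => ?_⟩
          cases x
          · exact acc_mono hT hj h0
          · exact acc_mono hT hj h1
      obtain ⟨J, hJ⟩ := key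
      apply Set.Finite.subset ((Set.finite_Iio J).prod (Set.finite_univ (α := Q19 × Q19)))
      rintro ⟨j, s', t⟩ ⟨_, h2, _⟩
      refine ⟨?_, trivial⟩
      show j ∈ Set.Iio J
      by_contra hjJ
      exact h2 (by rw [hJ j (by simpa using hjJ)]; trivial)
    · push_neg at hE
      have hEmp : Entries T = ∅ := by
        ext ⟨j, s, t⟩
        simp only [Entries, Set.mem_setOf_eq, Set.mem_empty_iff_false, iff_false, not_and]
        intro _ _ h3
        exact hE (j + 1) t h3
      rw [hEmp]; exact Set.finite_empty
  · intro n
    set k := 2 * n with hkdef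
    obtain ⟨a, ha⟩ : Even (k * (k + 1)) := Nat.even_mul_succ_self k
    have hx : k * k + k = 2 * a := by
      have h2 : k * (k + 1) = k * k + k := by ring
      linarith [ha, h2]
    -- the G-run: indices a+k … a+2k are all G
    have hGrun : ∀ j, a + k ≤ j → j ≤ a + 2 * k → seqG j = Gg := by
      intro j hj1 hj2
      have : ¬∃ m : ℕ, 2 * (j + 1) = m * m + 3 * m :=
        not_H_of_between (k := k) (by linarith) (by linarith)
      unfold seqG; rw [if_neg this]
    refine ⟨fun j => if j < a + k then (∅ : Set Q19)
      else if j ≤ a + 2 * k + 1 then {true} else Set.univ, ⟨fun j => Set.subset_univ _, ?_⟩, ?_⟩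
    · intro j s t hs ht
      by_cases h1 : j < a + k
      · simp [h1] at hs
      · by_cases h2 : j ≤ a + 2 * k + 1
        · simp only [if_neg h1, if_pos h2, Set.mem_singleton_iff] at hs
          subst hs
          by_cases h3 : j ≤ a + 2 * k
          · have hseq := hGrun j (by omega) h3
            rw [hseq] at ht
            have ht' : t = true := by
              cases t
              · exact absurd ht (by simp [Gg])
              · rfl
            subst ht'
            show true ∈ (if j + 1 < a + k then (∅ : Set Q19)
              else if j + 1 ≤ a + 2 * k + 1 then {true} else Set.univ)
            rw [if_neg (by omega : ¬ j + 1 < a + k), if_pos (by omega : j + 1 ≤ a + 2 * k + 1)]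
            rfl
          · -- j = a + 2k + 1, next is univ
            show t ∈ (if j + 1 < a + k then (∅ : Set Q19)
              else if j + 1 ≤ a + 2 * k + 1 then {true} else Set.univ)
            rw [if_neg (by omega : ¬ j + 1 < a + k), if_neg (by omega : ¬ j + 1 ≤ a + 2 * k + 1)]
            trivial
        · show t ∈ (if j + 1 < a + k then (∅ : Set Q19)
            else if j + 1 ≤ a + 2 * k + 1 then {true} else Set.univ)
          rw [if_neg (by omega : ¬ j + 1 < a + k), if_neg (by omega : ¬ j + 1 ≤ a + 2 * k + 1)]
          trivial
    · -- lower bound on entries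
      set T : ℕ → Set Q19 := fun j => if j < a + k then (∅ : Set Q19)
        else if j ≤ a + 2 * k + 1 then {true} else Set.univ with hTdef
      set f : ℕ → ℕ × Q19 × Q19 := fun i => (a + k + i, (false, true)) with hfdef
      have hinj : Function.Injective f := by
        intro x y hxy
        simp only [hfdef, Prod.mk.injEq] at hxy
        omega
      have hsub : f '' (↑(Finset.range k) : Set ℕ) ⊆ Entries T := by
        rintro _ ⟨i, hi, rfl⟩
        simp only [Finset.coe_range, Set.mem_Iio] at hi
        refine ⟨?_, ?_, ?_⟩
        · show (false, true) ∈ seqG (a + k + i)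
          rw [hGrun (a + k + i) (by omega) (by omega)]
          simp [Gg]
        · show false ∉ T (a + k + i)
          simp only [hTdef, if_neg (by omega : ¬ a + k + i < a + k),
            if_pos (by omega : a + k + i ≤ a + 2 * k + 1)]
          simp
        · show true ∈ T (a + k + i + 1)
          simp only [hTdef, if_neg (by omega : ¬ a + k + i + 1 < a + k),
            if_pos (by omega : a + k + i + 1 ≤ a + 2 * k + 1)]
          rfl
      calc ((2 * n : ℕ) : ℕ∞) = (↑(Finset.range k) : Set ℕ).encard := by
            rw [Set.encard_coe_eq_coe_finsetCard, Finset.card_range]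
        _ = (f '' (↑(Finset.range k) : Set ℕ)).encard :=
            (hinj.injOn.encard_image).symm
        _ ≤ (Entries T).encard := Set.encard_le_encard hsub
end
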